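/- Let (β,Θ) be an optimal policy for the energy maximization problem, and suppose β_{i,k} > 0 and Θ_{i,k} > 0 for some epoch i and sub-channel k; set p = (e^{2β_{i,k}/Θ_{i,k}} − 1)/γ_{i,k}. Then (1/γ_{i,k} + p)·log(1 + γ_{i,k}·p) ≥ p + ε, i.e., p ≥ p*(γ_{i,k},ε); and if in addition Θ_{i,k} < τ_i, then equality holds, i.e., p = p*(γ_{i,k},ε). -/

import Mathlib

/-- Energy consumed in one epoch on one sub-channel with gain `γ`, processing cost `ε`,
duration `θ` and delivered data `β`: `(θ/γ)(e^{2β/θ} − 1) + θ ε`, taken to be `0`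
when `θ = 0`. -/
noncomputable def EpochEnergy (γ ε θ β : ℝ) : ℝ :=
  if θ = 0 then 0 else θ / γ * (Real.exp (2 * β / θ) - 1) + θ * ε

/-- Feasibility of an energy-maximization policy `(β, Θ)` (data amounts and durations,
indexed by epoch `i ∈ {1,…,I}` and sub-channel `k ∈ {1,…,K}`): nonnegativity,
`Θ i k ≤ τ i`, `β i k = 0` whenever `Θ i k = 0`, the energy causality constraints,
the data causality constraints, and delivery of all data by the deadline. -/
def EnergyFeasible (I K : ℕ) (τ : ℕ → ℝ) (γ : ℕ → ℕ → ℝ) (E B : ℕ → ℝ) (ε : ℝ)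
    (β Θ : ℕ → ℕ → ℝ) : Prop :=
  (∀ i ∈ Finset.Icc 1 I, ∀ k ∈ Finset.Icc 1 K,
      0 ≤ β i k ∧ 0 ≤ Θ i k ∧ Θ i k ≤ τ i ∧ (Θ i k = 0 → β i k = 0)) ∧
  (∀ i ∈ Finset.Icc 1 I,
      ∑ j ∈ Finset.Icc 1 i, ∑ k ∈ Finset.Icc 1 K, EpochEnergy (γ j k) ε (Θ j k) (β j k)
        ≤ ∑ j ∈ Finset.Icc 1 i, E j) ∧
  (∀ i ∈ Finset.Icc 1 (I - 1),
      ∑ j ∈ Finset.Icc 1 i, ∑ k ∈ Finset.Icc 1 K, β j k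
        ≤ ∑ j ∈ Finset.Icc 1 i, B j) ∧
  (∑ j ∈ Finset.Icc 1 I, B j ≤ ∑ j ∈ Finset.Icc 1 I, ∑ k ∈ Finset.Icc 1 K, β j k)

/-- Total energy consumed by a policy `(β, Θ)`. -/
noncomputable def TotalEnergy (I K : ℕ) (γ : ℕ → ℕ → ℝ) (ε : ℝ)
    (β Θ : ℕ → ℕ → ℝ) : ℝ :=
  ∑ i ∈ Finset.Icc 1 I, ∑ k ∈ Finset.Icc 1 K, EpochEnergy (γ i k) ε (Θ i k) (β i k)

/-- A policy is optimal for the energy maximization problem if it is feasible and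
minimizes the total consumed energy (equivalently, maximizes the remaining energy)
among feasible policies. -/
def EnergyOptimal (I K : ℕ) (τ : ℕ → ℝ) (γ : ℕ → ℕ → ℝ) (E B : ℕ → ℝ) (ε : ℝ)
    (β Θ : ℕ → ℕ → ℝ) : Prop :=
  EnergyFeasible I K τ γ E B ε β Θ ∧
  ∀ β' Θ' : ℕ → ℕ → ℝ, EnergyFeasible I K τ γ E B ε β' Θ' →
    TotalEnergy I K γ ε β Θ ≤ TotalEnergy I K γ ε β' Θ'


open Filter Topology


lemma ex_left {c : ℝ → ℝ} {θ₀ d : ℝ} (hθ : 0 < θ₀)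
    (h : HasDerivAt c d θ₀) (hd : 0 < d) :
    ∃ t, 0 < t ∧ t < θ₀ ∧ c t < c θ₀ := by
  rw [hasDerivAt_iff_tendsto_slope] at h
  have h1 : ∀ᶠ t in 𝓝[≠] θ₀, 0 < slope c θ₀ t := h.eventually (eventually_gt_nhds hd)
  have h2 : ∀ᶠ t in 𝓝[<] θ₀, 0 < slope c θ₀ t :=
    h1.filter_mono (nhdsWithin_mono _ (fun x hx => ne_of_lt hx))
  have h3 : ∀ᶠ t in 𝓝[<] θ₀, 0 < t :=
    eventually_nhdsWithin_of_eventually_nhds (eventually_gt_nhds hθ)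
  have h4 : ∀ᶠ t in 𝓝[<] θ₀, t < θ₀ := eventually_mem_nhdsWithin
  obtain ⟨t, hpos, hslope, hlt⟩ := (h3.and (h2.and h4)).exists
  refine ⟨t, hpos, hlt, ?_⟩
  rw [slope_def_field] at hslope
  by_contra hcon
  push_neg at hcon
  have : (c t - c θ₀) / (t - θ₀) ≤ 0 :=
    div_nonpos_of_nonneg_of_nonpos (by linarith) (by linarith)
  linarith

lemma ex_right {c : ℝ → ℝ} {θ₀ d τ : ℝ} (hτ : θ₀ < τ)
    (h : HasDerivAt c d θ₀) (hd : d < 0) :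
    ∃ t, θ₀ < t ∧ t < τ ∧ c t < c θ₀ := by
  rw [hasDerivAt_iff_tendsto_slope] at h
  have h1 : ∀ᶠ t in 𝓝[≠] θ₀, slope c θ₀ t < 0 := h.eventually (eventually_lt_nhds hd)
  have h2 : ∀ᶠ t in 𝓝[>] θ₀, slope c θ₀ t < 0 :=
    h1.filter_mono (nhdsWithin_mono _ (fun x hx => ne_of_gt hx))
  have h3 : ∀ᶠ t in 𝓝[>] θ₀, t < τ :=
    eventually_nhdsWithin_of_eventually_nhds (eventually_lt_nhds hτ)
  have h4 : ∀ᶠ t in 𝓝[>] θ₀, θ₀ < t := eventually_mem_nhdsWithin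
  obtain ⟨t, hlt, hslope, hgt⟩ := (h3.and (h2.and h4)).exists
  refine ⟨t, hgt, hlt, ?_⟩
  rw [slope_def_field] at hslope
  by_contra hcon
  push_neg at hcon
  have : (0:ℝ) ≤ (c t - c θ₀) / (t - θ₀) :=
    div_nonneg (by linarith) (by linarith)
  linarith

lemma deriv_c (g e b : ℝ) {θ₀ : ℝ} (hθ : θ₀ ≠ 0) :
    HasDerivAt (fun θ : ℝ => θ / g * (Real.exp (2 * b / θ) - 1) + θ * e)
      ((Real.exp (2 * b / θ₀) - 1 - (2 * b / θ₀) * Real.exp (2 * b / θ₀)) / g + e) θ₀ := by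
  have h1 : HasDerivAt (fun θ : ℝ => 2 * b / θ) (2 * b * (-(θ₀ ^ 2)⁻¹)) θ₀ := by
    simpa [div_eq_mul_inv] using (hasDerivAt_inv hθ).const_mul (2 * b)
  have h2 := (h1.exp.sub_const 1)
  have h4 : HasDerivAt (fun θ : ℝ => θ / g) (1 / g) θ₀ := by
    simpa using (hasDerivAt_id θ₀).div_const g
  have h5 := h4.mul h2
  have h6 := h5.add ((hasDerivAt_id θ₀).mul_const e)
  refine h6.congr_deriv ?_
  have h9 : θ₀ * θ₀⁻¹ = 1 := mul_inv_cancel₀ hθ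
  linear_combination (-(2 * b * Real.exp (2 * b / θ₀) / (g * θ₀))) * h9


lemma perturb_false (I K : ℕ) (τ : ℕ → ℝ) (γ : ℕ → ℕ → ℝ) (E B : ℕ → ℝ) (ε : ℝ)
    (β Θ : ℕ → ℕ → ℝ) (hopt : EnergyOptimal I K τ γ E B ε β Θ)
    (i k : ℕ) (hi : i ∈ Finset.Icc 1 I) (hk : k ∈ Finset.Icc 1 K)
    (t : ℝ) (ht0 : 0 < t) (htτ : t ≤ τ i)
    (hlt : EpochEnergy (γ i k) ε t (β i k) < EpochEnergy (γ i k) ε (Θ i k) (β i k)) :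
    False := by
  obtain ⟨⟨hfeas1, hfeas2, hfeas3, hfeas4⟩, hmin⟩ := hopt
  set Θ' : ℕ → ℕ → ℝ := fun j l => if j = i ∧ l = k then t else Θ j l with hΘ'def
  have hΘ'ik : Θ' i k = t := if_pos ⟨rfl, rfl⟩
  have hΘ'other : ∀ j l, ¬(j = i ∧ l = k) → Θ' j l = Θ j l := fun j l h => if_neg h
  have hterm : ∀ j l, EpochEnergy (γ j l) ε (Θ' j l) (β j l)
      ≤ EpochEnergy (γ j l) ε (Θ j l) (β j l) := by
    intro j l
    by_cases h : j = i ∧ l = k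
    · obtain ⟨rfl, rfl⟩ := h
      rw [hΘ'ik]; exact le_of_lt hlt
    · rw [hΘ'other j l h]
  have hfeas' : EnergyFeasible I K τ γ E B ε β Θ' := by
    refine ⟨?_, ?_, hfeas3, hfeas4⟩
    · intro j hj l hl
      obtain ⟨h1, h2, h3, h4⟩ := hfeas1 j hj l hl
      by_cases h : j = i ∧ l = k
      · obtain ⟨rfl, rfl⟩ := h
        rw [hΘ'ik]
        exact ⟨h1, le_of_lt ht0, htτ, fun h0 => absurd h0 (ne_of_gt ht0)⟩
      · rw [hΘ'other j l h]; exact ⟨h1, h2, h3, h4⟩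
    · intro m hm
      refine le_trans ?_ (hfeas2 m hm)
      exact Finset.sum_le_sum fun j _ => Finset.sum_le_sum fun l _ => hterm j l
  have hstrict : TotalEnergy I K γ ε β Θ' < TotalEnergy I K γ ε β Θ := by
    unfold TotalEnergy
    apply Finset.sum_lt_sum
    · intro j _; exact Finset.sum_le_sum fun l _ => hterm j l
    · refine ⟨i, hi, ?_⟩
      apply Finset.sum_lt_sum
      · intro l _; exact hterm i l
      · exact ⟨k, hk, by rw [hΘ'ik]; exact hlt⟩
  exact absurd (hmin β Θ' hfeas') (not_le.mpr hstrict)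

/-- In an optimal policy for energy maximization, any used power
`p = (e^{2β/Θ} − 1)/γ` satisfies `(1/γ + p) log(1+γp) ≥ p + ε` (i.e. `p ≥ p*(γ,ε)`),
with equality (i.e. `p = p*(γ,ε)`) when the epoch is only partially used. -/
theorem energy_optimal_power_at_least_pstar (I K : ℕ) (hI : 1 ≤ I) (hK : 1 ≤ K)
    (τ : ℕ → ℝ) (hτ : ∀ i ∈ Finset.Icc 1 I, 0 < τ i)
    (γ : ℕ → ℕ → ℝ) (hγ : ∀ i ∈ Finset.Icc 1 I, ∀ k ∈ Finset.Icc 1 K, 0 < γ i k)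
    (E : ℕ → ℝ) (hE : ∀ i ∈ Finset.Icc 1 I, 0 ≤ E i)
    (B : ℕ → ℝ) (hB : ∀ i ∈ Finset.Icc 1 I, 0 ≤ B i)
    (ε : ℝ) (hε : 0 < ε)
    (β Θ : ℕ → ℕ → ℝ) (hopt : EnergyOptimal I K τ γ E B ε β Θ)
    (i k : ℕ) (hi : i ∈ Finset.Icc 1 I) (hk : k ∈ Finset.Icc 1 K)
    (hβ : 0 < β i k) (hΘ : 0 < Θ i k) :
    (1 / γ i k + (Real.exp (2 * β i k / Θ i k) - 1) / γ i k)
          * Real.log (1 + γ i k * ((Real.exp (2 * β i k / Θ i k) - 1) / γ i k))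
        ≥ (Real.exp (2 * β i k / Θ i k) - 1) / γ i k + ε ∧
    (Θ i k < τ i →
      (1 / γ i k + (Real.exp (2 * β i k / Θ i k) - 1) / γ i k)
          * Real.log (1 + γ i k * ((Real.exp (2 * β i k / Θ i k) - 1) / γ i k))
        = (Real.exp (2 * β i k / Θ i k) - 1) / γ i k + ε) := by
  have hg : 0 < γ i k := hγ i hi k hk
  have hΘτ : Θ i k ≤ τ i := (hopt.1.1 i hi k hk).2.2.1
  set x := 2 * β i k / Θ i k with hx
  have hxpos : 0 < x := div_pos (by linarith) hΘ
  have hlog : Real.log (1 + γ i k * ((Real.exp x - 1) / γ i k)) = x := by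
    rw [mul_div_cancel₀ _ (ne_of_gt hg)]
    have h1 : 1 + (Real.exp x - 1) = Real.exp x := by ring
    rw [h1, Real.log_exp]
  have hEE : ∀ s : ℝ, s ≠ 0 → EpochEnergy (γ i k) ε s (β i k)
      = s / γ i k * (Real.exp (2 * β i k / s) - 1) + s * ε := by
    intro s hs; rw [EpochEnergy, if_neg hs]
  have hder := deriv_c (γ i k) ε (β i k) (ne_of_gt hΘ)
  rw [← hx] at hder
  have KEY1 : γ i k * ε ≤ x * Real.exp x - Real.exp x + 1 := by
    by_contra hcon
    push_neg at hcon
    have hD : 0 < (Real.exp x - 1 - x * Real.exp x) / γ i k + ε := by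
      have h1 : (x * Real.exp x - Real.exp x + 1) / γ i k < ε :=
        (div_lt_iff₀ hg).mpr (by linarith)
      have h2 : (Real.exp x - 1 - x * Real.exp x) / γ i k
          = -((x * Real.exp x - Real.exp x + 1) / γ i k) := by
        rw [← neg_div]; ring_nf
      rw [h2]
      linarith
    obtain ⟨t, ht0, htlt, hct⟩ := ex_left hΘ hder hD
    refine perturb_false I K τ γ E B ε β Θ hopt i k hi hk t ht0
      (le_trans (le_of_lt htlt) hΘτ) ?_
    rw [hEE t (ne_of_gt ht0), hEE (Θ i k) (ne_of_gt hΘ), ← hx]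
    simpa using hct
  refine ⟨?_, ?_⟩
  · rw [hlog, ge_iff_le, ← sub_nonneg]
    have h1 : (1 / γ i k + (Real.exp x - 1) / γ i k) * x - ((Real.exp x - 1) / γ i k + ε)
        = (x * Real.exp x - Real.exp x + 1 - γ i k * ε) / γ i k := by
      field_simp
      ring
    rw [h1]
    exact div_nonneg (by linarith) (le_of_lt hg)
  · intro hττ
    have KEY2 : x * Real.exp x - Real.exp x + 1 ≤ γ i k * ε := by
      by_contra hcon
      push_neg at hcon
      have hD : (Real.exp x - 1 - x * Real.exp x) / γ i k + ε < 0 := by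
        have h1 : ε < (x * Real.exp x - Real.exp x + 1) / γ i k :=
          (lt_div_iff₀ hg).mpr (by linarith)
        have h2 : (Real.exp x - 1 - x * Real.exp x) / γ i k
            = -((x * Real.exp x - Real.exp x + 1) / γ i k) := by
          rw [← neg_div]; ring_nf
        rw [h2]
        linarith
      obtain ⟨t, ht0, htlt, hct⟩ := ex_right hττ hder hD
      refine perturb_false I K τ γ E B ε β Θ hopt i k hi hk t (lt_trans hΘ ht0)
        (le_of_lt htlt) ?_
      rw [hEE t (ne_of_gt (lt_trans hΘ ht0)), hEE (Θ i k) (ne_of_gt hΘ), ← hx]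
      simpa using hct
    have heq : x * Real.exp x - Real.exp x + 1 = γ i k * ε := le_antisymm KEY2 KEY1
    rw [hlog, ← sub_eq_zero]
    have h1 : (1 / γ i k + (Real.exp x - 1) / γ i k) * x - ((Real.exp x - 1) / γ i k + ε)
        = (x * Real.exp x - Real.exp x + 1 - γ i k * ε) / γ i k := by
      field_simp
      ring
    rw [h1, heq, sub_self, zero_div]
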